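/- arXiv:2408.00237 — 2 statements merged into one kernel-verified Lean document; each statement's English description precedes it below -/
import Mathlib

section
/- Let X be an M×N real matrix with SVD X = U_X D_X V_Xᵀ, and let R ≤ min(M,N) be a positive integer. Define S = U_X D_S V_Xᵀ where D_S is the diagonal matrix with D_S[r,r] = D_X[r,r] = σ_r(X) for r = 1,…,R and D_S[r,r] = 0 for r > R. Then S attains the minimum of ‖X − S′‖_F² over all M×N real matrices S′ with rank(S′) ≤ R. -/
open Matrix BigOperators

/-- The singular values of a real `M × N` matrix, sorted in decreasing order and
indexed by `Fin N` (the square roots of the eigenvalues of `XᵀX`). -/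
noncomputable def svalAux {M N : ℕ} (X : Matrix (Fin M) (Fin N) ℝ) : Fin N → ℝ :=
  fun r => Real.sqrt
    (((show (Xᵀ * X).IsHermitian by
        simpa [Matrix.conjTranspose_eq_transpose_of_trivial] using
          Matrix.isHermitian_conjTranspose_mul_self X).eigenvalues ∘
      Tuple.sort ((show (Xᵀ * X).IsHermitian by
        simpa [Matrix.conjTranspose_eq_transpose_of_trivial] using
          Matrix.isHermitian_conjTranspose_mul_self X).eigenvalues)) r.rev)

/-- The `r`-th singular value (0-indexed, decreasing) of a real matrix, `0` if `r ≥ N`. -/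
noncomputable def sval {M N : ℕ} (X : Matrix (Fin M) (Fin N) ℝ) (r : ℕ) : ℝ :=
  if h : r < N then svalAux X ⟨r, h⟩ else 0

/-- Squared Frobenius norm. -/
noncomputable def frobSq {M N : ℕ} (X : Matrix (Fin M) (Fin N) ℝ) : ℝ :=
  ∑ i, ∑ j, (X i j) ^ 2

/-- Nuclear norm: sum of the singular values. -/
noncomputable def nucNorm {M N : ℕ} (X : Matrix (Fin M) (Fin N) ℝ) : ℝ :=
  ∑ r ∈ Finset.range (min M N), sval X r

/-!
Let `w₁, …, w_{N-R}` be an orthonormal family in the kernel of a competitor `S'` of rank at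
most `R`. By Bessel's inequality applied to the rows of `X - S'`,
`‖X - S'‖_F² ≥ ∑ₖ ‖(X - S') wₖ‖² = ∑ₖ ⟪XᵀX wₖ, wₖ⟫`, and by Ky Fan's principle the right-hand
side is at least the sum of the `N - R` smallest eigenvalues `σ_R², …, σ_{N-1}²` of `XᵀX`.
That sum dominates `‖X - S‖_F² = ∑_{R ≤ r < min M N} σ_r²`, since `U` and `V` have
orthonormal columns.
-/

open Finset Module
open scoped RealInnerProductSpace

theorem Fin.card_filter_le_val {n r : ℕ} : #{i : Fin n | r ≤ (i : ℕ)} = n - r := by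
  have h := card_filter_add_card_filter_not (s := (univ : Finset (Fin n))) fun i => (i : ℕ) < r
  simp only [not_lt, card_univ, Fintype.card_fin, Fin.card_filter_val_lt] at h
  omega

theorem Fin.sum_univ_le_sum_univ_of_le {K N : ℕ} (h : K ≤ N) {g : ℕ → ℝ} (hg : ∀ i, 0 ≤ g i) :
    ∑ i : Fin K, g i ≤ ∑ i : Fin N, g i := by
  simp only [Fin.sum_univ_eq_sum_range]
  exact sum_le_sum_of_subset_of_nonneg (range_subset_range.mpr h) fun i _ _ => hg i

theorem Antitone.sum_filter_le_le_sum_mul {n r : ℕ} {μ t : Fin n → ℝ} (hμ : Antitone μ)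
    (ht₀ : ∀ i, 0 ≤ t i) (ht₁ : ∀ i, t i ≤ 1) (ht : ∑ i, t i = (n - r : ℕ)) :
    ∑ i with r ≤ (i : Fin n).val, μ i ≤ ∑ i, μ i * t i := by
  obtain ⟨c, hhead, htail⟩ : ∃ c, (∀ i : Fin n, (i : ℕ) < r → c ≤ μ i) ∧
      (∀ i : Fin n, r ≤ (i : ℕ) → μ i ≤ c) := by
    by_cases hr : r < n
    · exact ⟨μ ⟨r, hr⟩, fun i hi => hμ (Fin.mk_le_mk.mpr hi.le),
        fun i hi => hμ (Fin.mk_le_mk.mpr hi)⟩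
    · obtain ⟨c, hc⟩ := (Set.finite_range μ).bddBelow
      exact ⟨c, fun i _ => hc ⟨i, rfl⟩, fun i hi => absurd i.isLt (by omega)⟩
  set u : Fin n → ℝ := fun i => t i - if r ≤ (i : ℕ) then 1 else 0
  have hu : ∑ i, u i = 0 := by
    simp only [u, sum_sub_distrib, ht, sum_boole, Fin.card_filter_le_val, sub_self]
  -- `c` separates the head `i < r` from the tail, so `μ - c` and `u` have the same sign
  have hterm : ∀ i, 0 ≤ (μ i - c) * u i := by
    intro i
    by_cases hi : r ≤ (i : ℕ)
    · simp only [u, if_pos hi]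
      nlinarith [htail i hi, ht₁ i]
    · simp only [u, if_neg hi]
      nlinarith [hhead i (by omega), ht₀ i]
  have hcentered : ∑ i, (μ i - c) * u i = ∑ i, μ i * u i := by
    simp only [sub_mul, sum_sub_distrib, ← mul_sum, hu, mul_zero, sub_zero]
  have hexpand : ∑ i, μ i * u i = ∑ i, μ i * t i - ∑ i with r ≤ (i : Fin n).val, μ i := by
    simp only [u, mul_sub, mul_ite, mul_one, mul_zero, sum_sub_distrib, sum_filter]
  linarith [sum_nonneg fun i (_ : i ∈ univ) => hterm i]

section KyFan

variable {ι E : Type*} [NormedAddCommGroup E] [InnerProductSpace ℝ E]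

theorem OrthonormalBasis.inner_map_self_eq_sum_of_eigenvectors [Fintype ι]
    (b : OrthonormalBasis ι ℝ E) {T : E →ₗ[ℝ] E} {μ : ι → ℝ} (hb : ∀ i, T (b i) = μ i • b i)
    (x : E) : ⟪T x, x⟫ = ∑ i, μ i * ⟪b i, x⟫ ^ 2 := by
  nth_rw 1 [← b.sum_repr' x]
  simp only [map_sum, map_smul, hb, sum_inner, real_inner_smul_left]
  exact sum_congr rfl fun i _ => by ring

/-- Ky Fan's minimum principle. -/
theorem OrthonormalBasis.sum_filter_le_le_sum_inner_map_self {n r : ℕ}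
    (b : OrthonormalBasis (Fin n) ℝ E) {T : E →ₗ[ℝ] E} {μ : Fin n → ℝ} (hμ : Antitone μ)
    (hb : ∀ i, T (b i) = μ i • b i) {w : Fin (n - r) → E} (hw : Orthonormal ℝ w) :
    ∑ i with r ≤ (i : Fin n).val, μ i ≤ ∑ k, ⟪T (w k), w k⟫ := by
  set t : Fin n → ℝ := fun i => ∑ k, ⟪b i, w k⟫ ^ 2
  have ht₁ : ∀ i, t i ≤ 1 := fun i => by
    simpa [t, real_inner_comm, b.orthonormal.1 i] using
      hw.sum_inner_products_le (b i) (s := univ)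
  have ht : ∑ i, t i = (n - r : ℕ) := by
    rw [sum_comm]
    simp [b.sum_sq_inner_right, hw.1]
  calc ∑ i with r ≤ (i : Fin n).val, μ i ≤ ∑ i, μ i * t i :=
        hμ.sum_filter_le_le_sum_mul (fun i => sum_nonneg fun k _ => sq_nonneg _) ht₁ ht
    _ = ∑ k, ⟪T (w k), w k⟫ := by
        simp only [b.inner_map_self_eq_sum_of_eigenvectors hb, t, mul_sum]
        exact sum_comm

end KyFan

theorem Submodule.exists_orthonormal_of_le_finrank {E : Type*} [NormedAddCommGroup E]
    [InnerProductSpace ℝ E] (K : Submodule ℝ E) [FiniteDimensional ℝ K] {m : ℕ}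
    (hm : m ≤ finrank ℝ K) : ∃ w : Fin m → E, Orthonormal ℝ w ∧ ∀ k, w k ∈ K := by
  let b := stdOrthonormalBasis ℝ K
  refine ⟨fun k => b (Fin.castLE hm k), ?_, fun k => (b _).2⟩
  exact (b.orthonormal.comp_linearIsometry K.subtypeₗᵢ).comp _ (Fin.castLE_injective hm)

namespace Matrix

theorem rank_add_finrank_ker_toEuclideanLin {m n : Type*} [Fintype m] [Fintype n]
    [DecidableEq n] (A : Matrix m n ℝ) :
    A.rank + finrank ℝ (LinearMap.ker (toEuclideanLin A)) = Fintype.card n := by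
  rw [rank_eq_finrank_range_toLin A (PiLp.basisFun 2 ℝ m) (PiLp.basisFun 2 ℝ n),
    ← toLpLin_eq_toLin, LinearMap.finrank_range_add_finrank_ker, finrank_euclideanSpace]

theorem exists_orthonormal_toEuclideanLin_eq_zero {M N R : ℕ}
    (A : Matrix (Fin M) (Fin N) ℝ) (hA : A.rank ≤ R) :
    ∃ w : Fin (N - R) → EuclideanSpace ℝ (Fin N),
      Orthonormal ℝ w ∧ ∀ k, toEuclideanLin A (w k) = 0 := by
  have := A.rank_add_finrank_ker_toEuclideanLin
  rw [Fintype.card_fin] at this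
  exact (LinearMap.ker _).exists_orthonormal_of_le_finrank (by omega)

theorem rank_mul_diagonal_mul_le {m n : Type*} [Fintype m] [Fintype n] {K R : ℕ}
    (A : Matrix m (Fin K) ℝ) (B : Matrix (Fin K) n ℝ) {d : Fin K → ℝ} (hd : ∀ i : Fin K, R ≤ (i : ℕ) → d i = 0) :
    (A * diagonal d * B).rank ≤ R := by
  classical
  refine (rank_mul_le_left _ _).trans <| (rank_mul_le_right _ _).trans ?_
  rw [rank_diagonal, Fintype.card_subtype]
  calc #{i | d i ≠ 0} ≤ #{i : Fin K | (i : ℕ) < R} :=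
        card_le_card fun i => by
          simp only [mem_filter, mem_univ, true_and]
          exact fun hi => by_contra fun h => hi (hd i (by omega))
    _ = min K R := Fin.card_filter_val_lt
    _ ≤ R := min_le_right K R

theorem inner_toEuclideanLin_transpose_mul_self {m n : Type*} [Fintype m] [Fintype n]
    [DecidableEq m] [DecidableEq n] (X : Matrix m n ℝ) (w : EuclideanSpace ℝ n) :
    ⟪toEuclideanLin (Xᵀ * X) w, w⟫ = ‖toEuclideanLin X w‖ ^ 2 := by
  have hcomp : toEuclideanLin (Xᵀ * X) w = toEuclideanLin Xᵀ (toEuclideanLin X w) := by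
    simp [toLpLin_apply, mulVec_mulVec]
  rw [← real_inner_self_eq_norm_sq, hcomp, ← conjTranspose_eq_transpose_of_trivial,
    toEuclideanLin_conjTranspose_eq_adjoint, LinearMap.adjoint_inner_left]

theorem posSemidef_transpose_mul_self {m n : Type*} [Fintype m] [Fintype n]
    (X : Matrix m n ℝ) : (Xᵀ * X).PosSemidef := by
  simpa [conjTranspose_eq_transpose_of_trivial] using posSemidef_conjTranspose_mul_self X

end Matrix

theorem frobSq_eq_trace {M N : ℕ} (B : Matrix (Fin M) (Fin N) ℝ) :
    frobSq B = (Bᵀ * B).trace := by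
  rw [frobSq, sum_comm]
  simp [trace, mul_apply, sq]

theorem frobSq_mul_mul_transpose {M N K : ℕ} {U : Matrix (Fin M) (Fin K) ℝ}
    {V : Matrix (Fin N) (Fin K) ℝ} (hU : Uᵀ * U = 1) (hV : Vᵀ * V = 1)
    (E : Matrix (Fin K) (Fin K) ℝ) : frobSq (U * E * Vᵀ) = frobSq E := by
  have h : (U * E * Vᵀ)ᵀ * (U * E * Vᵀ) = V * (Eᵀ * E * Vᵀ) := by
    simp only [transpose_mul, transpose_transpose, Matrix.mul_assoc]
    rw [← Matrix.mul_assoc Uᵀ, hU, Matrix.one_mul]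
  rw [frobSq_eq_trace, frobSq_eq_trace, h, trace_mul_comm, Matrix.mul_assoc, hV, Matrix.mul_one]

theorem frobSq_diagonal {K : ℕ} (d : Fin K → ℝ) : frobSq (diagonal d) = ∑ i, d i ^ 2 := by
  simp [frobSq, diagonal_apply, ite_pow]

theorem frobSq_mul_diagonal_mul_transpose_sub {M N K : ℕ} {U : Matrix (Fin M) (Fin K) ℝ}
    {V : Matrix (Fin N) (Fin K) ℝ} (hU : Uᵀ * U = 1) (hV : Vᵀ * V = 1) (d e : Fin K → ℝ) :
    frobSq (U * diagonal d * Vᵀ - U * diagonal e * Vᵀ) = ∑ i, (d i - e i) ^ 2 := by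
  rw [← Matrix.sub_mul, ← Matrix.mul_sub, diagonal_sub, frobSq_mul_mul_transpose hU hV,
    frobSq_diagonal]

theorem sum_norm_toEuclideanLin_sq_le_frobSq {M N m : ℕ} (B : Matrix (Fin M) (Fin N) ℝ)
    {w : Fin m → EuclideanSpace ℝ (Fin N)} (hw : Orthonormal ℝ w) :
    ∑ k, ‖toEuclideanLin B (w k)‖ ^ 2 ≤ frobSq B := by
  have hrow : ∀ k i, toEuclideanLin B (w k) i = ⟪w k, WithLp.toLp 2 (B i)⟫ := fun k i => by
    simp [mulVec, dotProduct, PiLp.inner_apply]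
  simp only [EuclideanSpace.norm_sq_eq, Real.norm_eq_abs, sq_abs, hrow]
  rw [sum_comm]
  refine sum_le_sum fun i _ => ?_
  simpa [EuclideanSpace.norm_sq_eq, real_inner_comm] using
    hw.sum_inner_products_le (WithLp.toLp 2 (B i)) (s := univ)

section SingularValues

variable {M N : ℕ} (X : Matrix (Fin M) (Fin N) ℝ)

theorem sval_sq_eq_eigenvalues_sort (hA : (Xᵀ * X).IsHermitian) (i : Fin N) :
    sval X i ^ 2 = hA.eigenvalues (Tuple.sort hA.eigenvalues i.rev) := by
  rw [sval, dif_pos i.isLt, svalAux]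
  exact Real.sq_sqrt ((posSemidef_transpose_mul_self X).eigenvalues_nonneg _)

theorem sval_sq_antitone : Antitone fun i : Fin N => sval X i ^ 2 := by
  intro i j hij
  have hA := (posSemidef_transpose_mul_self X).isHermitian
  simp only [sval_sq_eq_eigenvalues_sort X hA]
  exact Tuple.monotone_sort hA.eigenvalues (Fin.rev_le_rev.mpr hij)

theorem exists_orthonormalBasis_toEuclideanLin_transpose_mul_self_eq_sval_sq_smul :
    ∃ b : OrthonormalBasis (Fin N) ℝ (EuclideanSpace ℝ (Fin N)),
      ∀ i, toEuclideanLin (Xᵀ * X) (b i) = sval X i ^ 2 • b i := by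
  have hA := (posSemidef_transpose_mul_self X).isHermitian
  refine ⟨hA.eigenvectorBasis.reindex (Fin.revPerm.trans (Tuple.sort hA.eigenvalues)).symm,
    fun i => ?_⟩
  rw [OrthonormalBasis.reindex_apply, Equiv.symm_symm, sval_sq_eq_eigenvalues_sort X hA,
    toLpLin_apply, hA.mulVec_eigenvectorBasis]
  rfl

end SingularValues

theorem statement0_general {M N : ℕ} (R : ℕ)
    (X : Matrix (Fin M) (Fin N) ℝ)
    (U : Matrix (Fin M) (Fin (min M N)) ℝ) (V : Matrix (Fin N) (Fin (min M N)) ℝ)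
    (D DS : Matrix (Fin (min M N)) (Fin (min M N)) ℝ)
    (hU : Uᵀ * U = 1) (hV : Vᵀ * V = 1)
    (hD : ∀ r s : Fin (min M N), D r s = if r = s then sval X (r : ℕ) else 0)
    (hX : X = U * D * Vᵀ)
    (hDS : ∀ r s : Fin (min M N),
      DS r s = if r = s ∧ (r : ℕ) < R then sval X (r : ℕ) else 0)
    (S : Matrix (Fin M) (Fin N) ℝ) (hS : S = U * DS * Vᵀ) :
    S.rank ≤ R ∧
      ∀ S' : Matrix (Fin M) (Fin N) ℝ, S'.rank ≤ R →
        frobSq (X - S) ≤ frobSq (X - S') := by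
  have hD' : D = diagonal fun r : Fin (min M N) => sval X r := by
    ext r s
    rw [hD, diagonal_apply]
  have hDS' : DS = diagonal fun r : Fin (min M N) => if (r : ℕ) < R then sval X r else 0 := by
    ext r s
    rw [hDS, diagonal_apply]
    by_cases h : r = s <;> simp [h]
  refine ⟨?_, fun S' hS' => ?_⟩
  · rw [hS, hDS']
    exact rank_mul_diagonal_mul_le U Vᵀ fun i hi => if_neg (not_lt.mpr hi)
  obtain ⟨w, hw, hker⟩ := S'.exists_orthonormal_toEuclideanLin_eq_zero hS'
  obtain ⟨b, hb⟩ := exists_orthonormalBasis_toEuclideanLin_transpose_mul_self_eq_sval_sq_smul X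
  let g : ℕ → ℝ := fun r => if R ≤ r then sval X r ^ 2 else 0
  calc frobSq (X - S) = ∑ r : Fin (min M N), g r := by
        conv_lhs => rw [hX, hS, hD', hDS']
        rw [frobSq_mul_diagonal_mul_transpose_sub hU hV]
        refine sum_congr rfl fun r _ => ?_
        simp only [g]
        split_ifs <;> first | omega | simp
    _ ≤ ∑ i : Fin N, g i :=
        Fin.sum_univ_le_sum_univ_of_le (min_le_right M N) fun r => by positivity
    _ = ∑ i with R ≤ (i : Fin N).val, sval X i ^ 2 := by
        simp [g, sum_filter]
    _ ≤ ∑ k, ⟪toEuclideanLin (Xᵀ * X) (w k), w k⟫ :=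
        b.sum_filter_le_le_sum_inner_map_self (sval_sq_antitone X) hb hw
    _ = ∑ k, ‖toEuclideanLin (X - S') (w k)‖ ^ 2 := by
        simp only [inner_toEuclideanLin_transpose_mul_self, map_sub, LinearMap.sub_apply, hker,
          sub_zero]
    _ ≤ frobSq (X - S') := sum_norm_toEuclideanLin_sq_le_frobSq _ hw

/-- **Eckart-Young (Proposition 1).** Truncating the SVD of `X` to its top `R` singular
values gives a best approximation of `X`, in squared Frobenius norm, among all matrices
of rank at most `R`. -/
theorem statement0 {M N : ℕ} (R : ℕ) (hR : 0 < R) (hRmin : R ≤ min M N)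
    (X : Matrix (Fin M) (Fin N) ℝ)
    (U : Matrix (Fin M) (Fin (min M N)) ℝ) (V : Matrix (Fin N) (Fin (min M N)) ℝ)
    (D DS : Matrix (Fin (min M N)) (Fin (min M N)) ℝ)
    (hU : Uᵀ * U = 1) (hV : Vᵀ * V = 1)
    (hD : ∀ r s : Fin (min M N), D r s = if r = s then sval X (r : ℕ) else 0)
    (hX : X = U * D * Vᵀ)
    (hDS : ∀ r s : Fin (min M N),
      DS r s = if r = s ∧ (r : ℕ) < R then sval X (r : ℕ) else 0)
    (S : Matrix (Fin M) (Fin N) ℝ) (hS : S = U * DS * Vᵀ) :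
    S.rank ≤ R ∧
      ∀ S' : Matrix (Fin M) (Fin N) ℝ, S'.rank ≤ R →
        frobSq (X - S) ≤ frobSq (X - S') :=
  statement0_general R X U V D DS hU hV hD hX hDS S hS
end

section
/- Let X be an M×N real matrix with SVD X = U_X D_X V_Xᵀ and let λ > 0. Define S = U_X D_S V_Xᵀ where D_S is diagonal with D_S[r,r] = max(σ_r(X) − λ, 0) for all r. Then S is the unique global minimizer of the function S′ ↦ (1/2)‖X − S′‖_F² + λ‖S′‖_* over all M×N real matrices S′. -/
/-!
With `G = X - S = U diag(min(σ_r, λ)) Vᵀ` one has `⟨G, S⟩ = λ‖S‖_*`, and `⟨G, S'⟩ ≤ λ‖S'‖_*` for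
every `S'` because `|min(σ_r, λ)| ≤ λ` and `Σ_r |u_rᵀ S' v_r| ≤ ‖S'‖_*` (Cauchy–Schwarz in an
orthonormal eigenbasis of `S'ᵀS'`). So `G` is a subgradient of `λ‖·‖_*` at `S`, and expanding
`‖X - S'‖_F²` around `S` shows that the objective `f` satisfies
`f(S') - f(S) ≥ ½‖S - S'‖_F² > 0`.

The nuclear norm of `U diag(d) Vᵀ` is `Σ_r |d_r|`: by `charpoly_mul_comm'` its Gram matrix
`V diag(d²) Vᵀ` has, up to zeros, the eigenvalues of `diag(d²)`.
-/

open Matrix BigOperators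

lemma Polynomial.roots_X_pow_mul_prod_X_sub_C {R ι : Type*} [CommRing R] [IsDomain R]
    [Fintype ι] (m : ℕ) (a : ι → R) :
    (X ^ m * ∏ i, (X - C (a i))).roots =
      Multiset.replicate m 0 + Multiset.map a Finset.univ.val := by
  have hmonic : (X ^ m * ∏ i, (X - C (a i))).Monic :=
    (monic_X_pow m).mul (monic_prod_of_monic _ _ fun i _ => monic_X_sub_C (a i))
  rw [roots_mul hmonic.ne_zero, roots_X_pow, Multiset.nsmul_singleton, Finset.prod_eq_multiset_prod,
    ← roots_multiset_prod_X_sub_C (Multiset.map a _), Multiset.map_map]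
  rfl

namespace Matrix

lemma isHermitian_transpose_mul_self {m n : Type*} [Fintype m] (A : Matrix m n ℝ) :
    (Aᵀ * A).IsHermitian := by
  simpa [conjTranspose_eq_transpose_of_trivial] using isHermitian_conjTranspose_mul_self A

lemma eigenvalues_transpose_mul_self_nonneg {m n : Type*} [Fintype m] [Fintype n] [DecidableEq n]
    (A : Matrix m n ℝ) (j : n) :
    0 ≤ (isHermitian_transpose_mul_self A).eigenvalues j := by
  simpa [conjTranspose_eq_transpose_of_trivial] using
    (posSemidef_conjTranspose_mul_self A).eigenvalues_nonneg j

lemma IsHermitian.exists_orthogonal_diagonalize {n : Type*} [Fintype n] [DecidableEq n]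
    {B : Matrix n n ℝ} (hB : B.IsHermitian) :
    ∃ W : Matrix n n ℝ, W * Wᵀ = 1 ∧ Wᵀ * W = 1 ∧ Wᵀ * B * W = diagonal hB.eigenvalues := by
  have hstar : star (hB.eigenvectorUnitary : Matrix n n ℝ) =
      (hB.eigenvectorUnitary : Matrix n n ℝ)ᵀ := by
    ext i j
    simp [star_apply]
  refine ⟨hB.eigenvectorUnitary, ?_, ?_, ?_⟩
  · simpa [hstar] using (mem_unitaryGroup_iff).mp hB.eigenvectorUnitary.2
  · simpa [hstar] using (mem_unitaryGroup_iff').mp hB.eigenvectorUnitary.2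
  · have h := hB.conjStarAlgAut_star_eigenvectorUnitary
    rw [Unitary.conjStarAlgAut_star_apply, hstar] at h
    simpa using h

/-- Bessel's inequality, column by column. -/
lemma diag_transpose_mul_self_le {m n k : Type*} [Fintype m] [Fintype k] [DecidableEq k]
    {P : Matrix m k ℝ} (hP : Pᵀ * P = 1) (B : Matrix m n ℝ) (j : n) :
    ((Pᵀ * B)ᵀ * (Pᵀ * B)) j j ≤ (Bᵀ * B) j j := by
  set x : m → ℝ := fun i => B i j
  set v := Pᵀ *ᵥ x
  have hv : ((Pᵀ * B)ᵀ * (Pᵀ * B)) j j = v ⬝ᵥ v := by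
    simp [v, x, mul_apply, mulVec, dotProduct, mul_comm]
  have hx : (Bᵀ * B) j j = x ⬝ᵥ x := by
    simp [x, mul_apply, dotProduct]
  have hPv : (P *ᵥ v) ⬝ᵥ (P *ᵥ v) = v ⬝ᵥ v := by
    rw [dotProduct_mulVec, ← vecMul_transpose, vecMul_vecMul, hP, vecMul_one]
  have hxPv : x ⬝ᵥ (P *ᵥ v) = v ⬝ᵥ v := by
    rw [dotProduct_mulVec, ← mulVec_transpose]
  have hnonneg : 0 ≤ (x - P *ᵥ v) ⬝ᵥ (x - P *ᵥ v) :=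
    Finset.sum_nonneg fun i _ => mul_self_nonneg _
  rw [sub_dotProduct, dotProduct_sub, dotProduct_sub, hPv, hxPv, dotProduct_comm (P *ᵥ v), hxPv]
    at hnonneg
  linarith

open Polynomial in
theorem IsHermitian.sum_eigenvalues_eq_of_eq_mul_diagonal_mul_transpose
    {n k : Type*} [Fintype n] [DecidableEq n] [Fintype k] [DecidableEq k]
    {B : Matrix n n ℝ} (hB : B.IsHermitian) {V : Matrix n k ℝ} {e : k → ℝ}
    (hV : Vᵀ * V = 1) (hBe : B = V * diagonal e * Vᵀ) {f : ℝ → ℝ} (hf : f 0 = 0) :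
    ∑ i, f (hB.eigenvalues i) = ∑ r, f (e r) := by
  have hpoly :
      X ^ Fintype.card k * B.charpoly = X ^ Fintype.card n * (diagonal e).charpoly := by
    rw [hBe, Matrix.mul_assoc, charpoly_mul_comm', Matrix.mul_assoc, hV, Matrix.mul_one]
  rw [hB.charpoly_eq, charpoly_diagonal] at hpoly
  simpa [roots_X_pow_mul_prod_X_sub_C, hf] using
    congrArg (fun p : ℝ[X] => (p.roots.map f).sum) hpoly

lemma sum_abs_diag_mul_transpose_le {k n : Type*} [Fintype k] [Fintype n] (F H : Matrix k n ℝ) :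
    ∑ r, |(F * Hᵀ) r r| ≤ ∑ j, √((Fᵀ * F) j j) * √((Hᵀ * H) j j) := calc
  ∑ r, |(F * Hᵀ) r r| ≤ ∑ r, ∑ j, |F r j| * |H r j| := by
    refine Finset.sum_le_sum fun r _ => ?_
    simpa [mul_apply, abs_mul] using
      Finset.abs_sum_le_sum_abs (fun j => F r j * H r j) Finset.univ
  _ = ∑ j, ∑ r, |F r j| * |H r j| := Finset.sum_comm
  _ ≤ ∑ j, √((Fᵀ * F) j j) * √((Hᵀ * H) j j) := by
    refine Finset.sum_le_sum fun j _ => ?_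
    simpa [mul_apply, sq] using
      Real.sum_mul_le_sqrt_mul_sqrt Finset.univ (fun r => |F r j|) (fun r => |H r j|)

end Matrix

/-- A nonzero sorted eigenvalue of `AᵀA` at position `≥ min M N` would give `AᵀA` more than
`rank A ≤ min M N` nonzero eigenvalues. -/
lemma svalAux_eq_zero_of_min_le {M N : ℕ} (A : Matrix (Fin M) (Fin N) ℝ) (j : Fin N)
    (hj : min M N ≤ (j : ℕ)) : svalAux A j = 0 := by
  classical
  set hB := isHermitian_transpose_mul_self A
  set μ := hB.eigenvalues
  set σ := Tuple.sort μ
  suffices hz : μ (σ j.rev) = 0 by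
    show √(μ (σ j.rev)) = 0
    rw [hz, Real.sqrt_zero]
  by_contra hne
  have hpos : 0 < μ (σ j.rev) := (eigenvalues_transpose_mul_self_nonneg A _).lt_of_ne' hne
  have hsub : Finset.Ici j.rev ⊆ Finset.univ.filter (fun i => μ (σ i) ≠ 0) := fun i hi =>
    Finset.mem_filter.mpr ⟨Finset.mem_univ i,
      (hpos.trans_le (Tuple.monotone_sort μ (Finset.mem_Ici.mp hi))).ne'⟩
  have hcard : (Finset.univ.filter (fun i => μ (σ i) ≠ 0)).card
      = (Finset.univ.filter (fun i => μ i ≠ 0)).card := by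
    rw [← Fintype.card_subtype, ← Fintype.card_subtype]
    exact Fintype.card_congr (σ.subtypeEquiv fun i => Iff.rfl)
  have hrank : (Finset.univ.filter (fun i => μ i ≠ 0)).card ≤ min M N := by
    rw [← Fintype.card_subtype, ← hB.rank_eq_card_non_zero_eigs, rank_transpose_mul_self]
    exact le_min (rank_le_height A) (rank_le_width A)
  have hle := (Finset.card_le_card hsub).trans (hcard.trans_le hrank)
  rw [Fin.card_Ici, Fin.val_rev] at hle
  omega

lemma sval_nonneg {M N : ℕ} (A : Matrix (Fin M) (Fin N) ℝ) (r : ℕ) : 0 ≤ sval A r := by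
  unfold sval
  split
  · exact Real.sqrt_nonneg _
  · exact le_rfl

lemma nucNorm_eq_sum_sqrt_eigenvalues {M N : ℕ} (A : Matrix (Fin M) (Fin N) ℝ) :
    nucNorm A = ∑ j, √((isHermitian_transpose_mul_self A).eigenvalues j) := by
  set μ := (isHermitian_transpose_mul_self A).eigenvalues
  have hrange : nucNorm A = ∑ r ∈ Finset.range N, sval A r := by
    refine Finset.sum_subset (Finset.range_subset_range.mpr (min_le_right M N)) fun r hrN hr => ?_
    have hrN : r < N := Finset.mem_range.mp hrN
    simp only [sval, dif_pos hrN]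
    exact svalAux_eq_zero_of_min_le A ⟨r, hrN⟩ (not_lt.mp (hr ∘ Finset.mem_range.mpr))
  calc nucNorm A = ∑ j : Fin N, √(μ (Tuple.sort μ (Fin.revPerm j))) := by
        rw [hrange, ← Fin.sum_univ_eq_sum_range]
        simp [sval, svalAux, μ]
    _ = ∑ j, √(μ j) := by
        rw [Equiv.sum_comp Fin.revPerm (fun j => √(μ (Tuple.sort μ j))),
          Equiv.sum_comp (Tuple.sort μ) (fun j => √(μ j))]

theorem nucNorm_mul_diagonal_mul_transpose {M N : ℕ} {k : Type*} [Fintype k] [DecidableEq k]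
    {U : Matrix (Fin M) k ℝ} {V : Matrix (Fin N) k ℝ} (hU : Uᵀ * U = 1) (hV : Vᵀ * V = 1)
    (d : k → ℝ) : nucNorm (U * diagonal d * Vᵀ) = ∑ r, |d r| := by
  have hgram : (U * diagonal d * Vᵀ)ᵀ * (U * diagonal d * Vᵀ) =
      V * diagonal (fun r => d r * d r) * Vᵀ := by
    simp only [transpose_mul, transpose_transpose, diagonal_transpose, Matrix.mul_assoc]
    rw [← Matrix.mul_assoc Uᵀ, hU, Matrix.one_mul, ← Matrix.mul_assoc (diagonal d),
      diagonal_mul_diagonal]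
  rw [nucNorm_eq_sum_sqrt_eigenvalues,
    (isHermitian_transpose_mul_self _).sum_eigenvalues_eq_of_eq_mul_diagonal_mul_transpose hV hgram
      Real.sqrt_zero]
  simp [Real.sqrt_mul_self_eq_abs]

theorem sum_abs_diag_le_nucNorm {M N : ℕ} {k : Type*} [Fintype k] [DecidableEq k]
    (A : Matrix (Fin M) (Fin N) ℝ) {P : Matrix (Fin M) k ℝ} {Q : Matrix (Fin N) k ℝ}
    (hP : Pᵀ * P = 1) (hQ : Qᵀ * Q = 1) : ∑ r, |(Pᵀ * A * Q) r r| ≤ nucNorm A := by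
  obtain ⟨W, hWWt, hWtW, hdiag⟩ :=
    (isHermitian_transpose_mul_self A).exists_orthogonal_diagonalize
  have hfactor : Pᵀ * A * Q = (Pᵀ * (A * W)) * (Qᵀ * W)ᵀ := by
    rw [transpose_mul, transpose_transpose]
    conv_rhs => rw [Matrix.mul_assoc, Matrix.mul_assoc A, ← Matrix.mul_assoc W, hWWt,
      Matrix.one_mul, ← Matrix.mul_assoc]
  have hcol (j) : ((A * W)ᵀ * (A * W)) j j = (isHermitian_transpose_mul_self A).eigenvalues j := by
    rw [transpose_mul, Matrix.mul_assoc, ← Matrix.mul_assoc Aᵀ, ← Matrix.mul_assoc, hdiag,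
      diagonal_apply_eq]
  rw [nucNorm_eq_sum_sqrt_eigenvalues, hfactor]
  refine (sum_abs_diag_mul_transpose_le _ _).trans (Finset.sum_le_sum fun j _ => ?_)
  calc √(((Pᵀ * (A * W))ᵀ * (Pᵀ * (A * W))) j j) * √(((Qᵀ * W)ᵀ * (Qᵀ * W)) j j)
      ≤ √(((A * W)ᵀ * (A * W)) j j) * √((Wᵀ * W) j j) := by
        gcongr
        exacts [diag_transpose_mul_self_le hP _ j, diag_transpose_mul_self_le hQ _ j]
    _ = √((isHermitian_transpose_mul_self A).eigenvalues j) := by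
        rw [hcol, hWtW, one_apply_eq, Real.sqrt_one, mul_one]

noncomputable def frobInner {m n : Type*} [Fintype m] [Fintype n] (A B : Matrix m n ℝ) : ℝ :=
  ∑ i, ∑ j, A i j * B i j

section Frobenius

variable {m n k : Type*} [Fintype m] [Fintype n] [Fintype k] [DecidableEq k]

lemma frobInner_eq_trace (A B : Matrix m n ℝ) : frobInner A B = trace (Aᵀ * B) := by
  simp only [frobInner, trace, diag, mul_apply, transpose_apply]
  exact Finset.sum_comm

lemma frobInner_sub_right (A B C : Matrix m n ℝ) :
    frobInner A (B - C) = frobInner A B - frobInner A C := by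
  simp [frobInner, mul_sub, Finset.sum_sub_distrib]

lemma frobInner_mul_diagonal_mul_transpose (U : Matrix m k ℝ) (V : Matrix n k ℝ) (g : k → ℝ)
    (B : Matrix m n ℝ) : frobInner (U * diagonal g * Vᵀ) B = ∑ r, g r * (Uᵀ * B * V) r r := by
  rw [frobInner_eq_trace, transpose_mul, transpose_mul, transpose_transpose, diagonal_transpose,
    Matrix.mul_assoc V, trace_mul_comm V]
  simp [trace, Matrix.mul_assoc]

lemma frobInner_mul_diagonal_mul_transpose_le {M N : ℕ} {U : Matrix (Fin M) k ℝ}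
    {V : Matrix (Fin N) k ℝ} (hU : Uᵀ * U = 1) (hV : Vᵀ * V = 1) {g : k → ℝ} {c : ℝ} (hc : 0 ≤ c)
    (hg : ∀ r, |g r| ≤ c) (B : Matrix (Fin M) (Fin N) ℝ) :
    frobInner (U * diagonal g * Vᵀ) B ≤ c * nucNorm B := calc
  frobInner (U * diagonal g * Vᵀ) B = ∑ r, g r * (Uᵀ * B * V) r r :=
    frobInner_mul_diagonal_mul_transpose U V g B
  _ ≤ ∑ r, c * |(Uᵀ * B * V) r r| := Finset.sum_le_sum fun r _ =>
    (le_abs_self _).trans <| (abs_mul _ _).trans_le <|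
      mul_le_mul_of_nonneg_right (hg r) (abs_nonneg _)
  _ = c * ∑ r, |(Uᵀ * B * V) r r| := (Finset.mul_sum _ _ _).symm
  _ ≤ c * nucNorm B := mul_le_mul_of_nonneg_left (sum_abs_diag_le_nucNorm B hU hV) hc

end Frobenius

lemma frobSq_add {M N : ℕ} (A B : Matrix (Fin M) (Fin N) ℝ) :
    frobSq (A + B) = frobSq A + 2 * frobInner A B + frobSq B := by
  simp only [frobSq, frobInner, Finset.mul_sum, ← Finset.sum_add_distrib, Matrix.add_apply]
  exact Finset.sum_congr rfl fun i _ => Finset.sum_congr rfl fun j _ => by ring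

lemma frobSq_pos {M N : ℕ} {A : Matrix (Fin M) (Fin N) ℝ} (hA : A ≠ 0) : 0 < frobSq A := by
  obtain ⟨i, j, hij⟩ : ∃ i j, A i j ≠ 0 := by
    by_contra! h
    exact hA (ext h)
  exact Finset.sum_pos' (fun i _ => Finset.sum_nonneg fun j _ => sq_nonneg _)
    ⟨i, Finset.mem_univ i,
      Finset.sum_pos' (fun j _ => sq_nonneg _) ⟨j, Finset.mem_univ j, by positivity⟩⟩

/-- `X - S` is a subgradient of `lam * nucNorm` at `S`; the quadratic term makes the minimum
strict. -/
lemma objective_lt_of_subgradient {M N : ℕ} {lam : ℝ} {X S S' : Matrix (Fin M) (Fin N) ℝ}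
    (hS : frobInner (X - S) S = lam * nucNorm S)
    (hS' : frobInner (X - S) S' ≤ lam * nucNorm S') (hne : S' ≠ S) :
    (1 / 2) * frobSq (X - S) + lam * nucNorm S <
      (1 / 2) * frobSq (X - S') + lam * nucNorm S' := by
  have hexpand : frobSq (X - S') =
      frobSq (X - S) + 2 * frobInner (X - S) (S - S') + frobSq (S - S') := by
    rw [← frobSq_add, sub_add_sub_cancel]
  have hpos : 0 < frobSq (S - S') := frobSq_pos (sub_ne_zero.mpr hne.symm)
  rw [frobInner_sub_right] at hexpand
  linarith

lemma sub_max_sub_zero (s lam : ℝ) : s - max (s - lam) 0 = min s lam := by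
  rw [← min_sub_sub_left, sub_zero, sub_sub_cancel, min_comm]

lemma min_mul_max_sub_zero (s lam : ℝ) : min s lam * max (s - lam) 0 = lam * max (s - lam) 0 := by
  rcases le_total s lam with h | h
  · simp [sub_nonpos.mpr h]
  · rw [min_eq_right h]

/-- **Proposition 2 (singular value soft-thresholding).** Soft-thresholding the singular
values of `X` at level `lam` gives the unique global minimizer of the nuclear-norm
penalized least squares objective. -/
theorem statement1 {M N : ℕ} (lam : ℝ) (hlam : 0 < lam)
    (X : Matrix (Fin M) (Fin N) ℝ)
    (U : Matrix (Fin M) (Fin (min M N)) ℝ) (V : Matrix (Fin N) (Fin (min M N)) ℝ)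
    (D DS : Matrix (Fin (min M N)) (Fin (min M N)) ℝ)
    (hU : Uᵀ * U = 1) (hV : Vᵀ * V = 1)
    (hD : ∀ r s : Fin (min M N), D r s = if r = s then sval X (r : ℕ) else 0)
    (hX : X = U * D * Vᵀ)
    (hDS : ∀ r s : Fin (min M N),
      DS r s = if r = s then max (sval X (r : ℕ) - lam) 0 else 0)
    (S : Matrix (Fin M) (Fin N) ℝ) (hS : S = U * DS * Vᵀ) :
    ∀ S' : Matrix (Fin M) (Fin N) ℝ, S' ≠ S →
      (1 / 2) * frobSq (X - S) + lam * nucNorm S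
        < (1 / 2) * frobSq (X - S') + lam * nucNorm S' := by
  intro S' hne
  set ds : Fin (min M N) → ℝ := fun r => max (sval X r - lam) 0
  set g : Fin (min M N) → ℝ := fun r => min (sval X r) lam
  have hSd : S = U * diagonal ds * Vᵀ := by
    rw [hS]; congr; ext r s; rw [hDS, diagonal_apply]
  have hXS : X - S = U * diagonal g * Vᵀ := by
    rw [hX, hSd, ← Matrix.sub_mul, ← Matrix.mul_sub]
    congr; ext r s
    rw [Matrix.sub_apply, hD, diagonal_apply, diagonal_apply]
    split_ifs
    exacts [sub_max_sub_zero _ _, sub_zero 0]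
  refine objective_lt_of_subgradient ?_ ?_ hne
  · have hcore : Uᵀ * S * V = diagonal ds := by
      simp only [hSd, ← Matrix.mul_assoc, hU, Matrix.one_mul]
      rw [Matrix.mul_assoc, hV, Matrix.mul_one]
    rw [hXS, frobInner_mul_diagonal_mul_transpose, hcore, hSd,
      nucNorm_mul_diagonal_mul_transpose hU hV, Finset.mul_sum]
    refine Finset.sum_congr rfl fun r _ => ?_
    rw [diagonal_apply_eq, abs_of_nonneg (le_max_right _ _), min_mul_max_sub_zero]
  · rw [hXS]
    refine frobInner_mul_diagonal_mul_transpose_le hU hV hlam.le (fun r => ?_) S'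
    rw [abs_of_nonneg (le_min (sval_nonneg X r) hlam.le)]
    exact min_le_right _ _
end
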